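/- For any supervisor S under cyber-attacks, the condition 'for all w ∈ L_a(S^a/G) and σ ∈ Σ_c, wσ ∈ L_a(S^a/G) implies for all v ∈ Φ(w) and all γ ∈ S^a(v), σ ∈ γ' holds if and only if L_a(S^a/G) = L_r(S^a/G). -/

import Mathlib

/-- The large language `L_a(S^a/G)` of supervisor `S` under cyber-attacks. -/
inductive LargeL {A B : Type*} (L : Set (List A)) (Suc Sca : Set A)
    (Φ : List A → Set (List B)) (S : List B → Set A) : List A → Prop
  | nil : LargeL L Suc Sca Φ S []
  | snoc (w : List A) (σ : A) :
      LargeL L Suc Sca Φ S w → w ++ [σ] ∈ L →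
      (σ ∈ Suc ∨ ∃ v ∈ Φ w, ∃ γ' γ'' : Set A,
        γ' ⊆ Sca ∧ γ'' ⊆ Sca ∧ σ ∈ (S v \ γ') ∪ γ'') →
      LargeL L Suc Sca Φ S (w ++ [σ])

/-- The small language `L_r(S^a/G)` of supervisor `S` under cyber-attacks. -/
inductive SmallL {A B : Type*} (L : Set (List A)) (Suc Sca : Set A)
    (Φ : List A → Set (List B)) (S : List B → Set A) : List A → Prop
  | nil : SmallL L Suc Sca Φ S []
  | snoc (w : List A) (σ : A) :
      SmallL L Suc Sca Φ S w → w ++ [σ] ∈ L →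
      (σ ∈ Suc ∨ ∀ v ∈ Φ w, ∀ γ' γ'' : Set A,
        γ' ⊆ Sca → γ'' ⊆ Sca → σ ∈ (S v \ γ') ∪ γ'') →
      SmallL L Suc Sca Φ S (w ++ [σ])

/-! Since every `Φ w` is nonempty, a step allowed under all observations and attacks is in
particular allowed under some, so `L_r ⊆ L_a` always. The condition says precisely that each
controllable step of `L_a` passes the universal test of `L_r`, which gives `L_a ⊆ L_r` by
induction; conversely, if `L_a = L_r`, the last step of any `wσ ∈ L_a` is a step of `L_r`. -/

section

variable {A B : Type*} {L : Set (List A)} {Suc Sca : Set A}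
  {Φ : List A → Set (List B)} {S : List B → Set A}

theorem SmallL.snoc_inv {w : List A} {σ : A} (h : SmallL L Suc Sca Φ S (w ++ [σ])) :
    σ ∈ Suc ∨ ∀ v ∈ Φ w, ∀ γ' γ'' : Set A,
      γ' ⊆ Sca → γ'' ⊆ Sca → σ ∈ (S v \ γ') ∪ γ'' := by
  generalize hx : w ++ [σ] = x at h
  cases h with
  | nil => simp at hx
  | snoc w' σ' _ _ hσ' =>
    obtain ⟨rfl, rfl⟩ : w = w' ∧ σ = σ' := by simpa using hx
    exact hσ'

theorem SmallL.largeL (hLpc : ∀ u w : List A, u <+: w → w ∈ L → u ∈ L)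
    (hΦ : ∀ w ∈ L, (Φ w).Nonempty) {w : List A} (hw : SmallL L Suc Sca Φ S w) :
    LargeL L Suc Sca Φ S w := by
  induction hw with
  | nil => exact .nil
  | snoc w σ _ hwσ hσ ih =>
    refine .snoc w σ ih hwσ (hσ.imp_right fun hall => ?_)
    obtain ⟨v, hv⟩ := hΦ w (hLpc w (w ++ [σ]) ⟨[σ], rfl⟩ hwσ)
    exact ⟨v, hv, ∅, ∅, Set.empty_subset _, Set.empty_subset _,
      hall v hv ∅ ∅ (Set.empty_subset _) (Set.empty_subset _)⟩

theorem LargeL.smallL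
    (hcond : ∀ (w : List A) (σ : A), LargeL L Suc Sca Φ S w → σ ∉ Suc →
       LargeL L Suc Sca Φ S (w ++ [σ]) →
       ∀ v ∈ Φ w, ∀ γ' γ'' : Set A, γ' ⊆ Sca → γ'' ⊆ Sca → σ ∈ (S v \ γ') ∪ γ'')
    {w : List A} (hw : LargeL L Suc Sca Φ S w) : SmallL L Suc Sca Φ S w := by
  induction hw with
  | nil => exact .nil
  | snoc w σ hw hwσ hσ ih =>
    refine .snoc w σ ih hwσ (or_iff_not_imp_left.mpr fun hσuc => ?_)
    exact hcond w σ hw hσuc (.snoc w σ hw hwσ hσ)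

end

theorem stmt14_general {A B : Type*} (L : Set (List A)) (Suc Sca : Set A)
    (Φ : List A → Set (List B)) (S : List B → Set A)
    (hLpc : ∀ u w : List A, u <+: w → w ∈ L → u ∈ L)
    (hΦ : ∀ w ∈ L, (Φ w).Nonempty) :
    (∀ (w : List A) (σ : A), LargeL L Suc Sca Φ S w → σ ∉ Suc →
       LargeL L Suc Sca Φ S (w ++ [σ]) →
       ∀ v ∈ Φ w, ∀ γ' γ'' : Set A, γ' ⊆ Sca → γ'' ⊆ Sca →
         σ ∈ (S v \ γ') ∪ γ'') ↔
    (∀ w : List A, LargeL L Suc Sca Φ S w ↔ SmallL L Suc Sca Φ S w) := by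
  constructor
  · intro hcond w
    exact ⟨LargeL.smallL hcond, SmallL.largeL hLpc hΦ⟩
  · intro heq w σ _ hσ hwσ
    exact ((heq _).mp hwσ).snoc_inv.resolve_left hσ

/-- the second nonblocking condition holds iff the large and
small languages coincide. -/
theorem stmt14 {A B : Type*} (L : Set (List A)) (Suc Sca : Set A)
    (Φ : List A → Set (List B)) (S : List B → Set A)
    (hLpc : ∀ u w : List A, u <+: w → w ∈ L → u ∈ L)
    (hScaC : Sca ⊆ {σ : A | σ ∉ Suc})
    (hΦ : ∀ w ∈ L, (Φ w).Nonempty) :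
    (∀ (w : List A) (σ : A), LargeL L Suc Sca Φ S w → σ ∉ Suc →
       LargeL L Suc Sca Φ S (w ++ [σ]) →
       ∀ v ∈ Φ w, ∀ γ' γ'' : Set A, γ' ⊆ Sca → γ'' ⊆ Sca →
         σ ∈ (S v \ γ') ∪ γ'') ↔
    (∀ w : List A, LargeL L Suc Sca Φ S w ↔ SmallL L Suc Sca Φ S w) :=
  stmt14_general L Suc Sca Φ S hLpc hΦ
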